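/- Clifford's theorem: let Γ be a finite group, ρ an irreducible finite-dimensional complex representation of Γ, and N ⊴ Γ a normal subgroup. Let τ be an irreducible N-subrepresentation of the restriction ρ|_N, let σ be the τ-isotypic component of ρ|_N (the sum of all N-subrepresentations of ρ|_N isomorphic to τ), and let Δ = {g ∈ Γ | τ^g ≅ τ} be the stabilizer of the isomorphism class of τ under the adjoint action, where τ^g(n) := τ(g⁻¹ n g). Then the subspace σ is invariant under ρ(Δ), and, viewed as a representation of Δ, it satisfies ρ ≅ Ind_Δ^Γ σ, the representation of Γ induced from σ. -/

import Mathlib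

/-- A representation is irreducible if the space is nonzero and the only invariant
subspaces are `⊥` and `⊤`. -/
def IsIrredRep {G V : Type*} [Group G] [AddCommGroup V] [Module ℂ V]
    (ρ : Representation ℂ G V) : Prop :=
  Nontrivial V ∧ ∀ U : Submodule ℂ V, (∀ g : G, ∀ v ∈ U, ρ g v ∈ U) → U = ⊥ ∨ U = ⊤

/-- Two representations of the same group are isomorphic if there is an equivariant linear
equivalence between the underlying spaces. -/
def RepIso {G V₁ V₂ : Type*} [Group G] [AddCommGroup V₁] [Module ℂ V₁]
    [AddCommGroup V₂] [Module ℂ V₂]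
    (ρ₁ : Representation ℂ G V₁) (ρ₂ : Representation ℂ G V₂) : Prop :=
  ∃ e : V₁ ≃ₗ[ℂ] V₂, ∀ (g : G) (v : V₁), e (ρ₁ g v) = ρ₂ g (e v)

/-- The representation of a subgroup `H ≤ Γ` on an `H`-invariant subspace `U`. -/
def subRep {Γ V : Type*} [Group Γ] [AddCommGroup V] [Module ℂ V]
    (ρ : Representation ℂ Γ V) (H : Subgroup Γ) (U : Submodule ℂ V)
    (hU : ∀ h ∈ H, ∀ v ∈ U, ρ h v ∈ U) : Representation ℂ H U where
  toFun h := (ρ (h : Γ)).restrict (fun v hv => hU h h.2 v hv)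
  map_one' := by
    ext v
    simp [LinearMap.restrict_coe_apply]
  map_mul' a b := by
    ext v
    simp [LinearMap.restrict_coe_apply]

/-- For `g : Γ` and an `N`-invariant subspace `W` (with `N ⊴ Γ`), the conjugated
representation `τ^g` of `N` on `W`, sending `n` to the action of `g⁻¹ n g`. -/
def conjSubRep {Γ V : Type*} [Group Γ] [AddCommGroup V] [Module ℂ V]
    (ρ : Representation ℂ Γ V) (N : Subgroup Γ) (hN : N.Normal) (W : Submodule ℂ V)
    (hW : ∀ n ∈ N, ∀ v ∈ W, ρ n v ∈ W) (g : Γ) : Representation ℂ N W where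
  toFun n := (ρ (g⁻¹ * (n : Γ) * g)).restrict
    (fun v hv => hW _ (by simpa using hN.conj_mem _ n.2 g⁻¹) v hv)
  map_one' := by
    ext v
    simp [LinearMap.restrict_coe_apply]
  map_mul' a b := by
    ext v
    have h : g⁻¹ * (↑(a * b) : Γ) * g = (g⁻¹ * ↑a * g) * (g⁻¹ * ↑b * g) := by
      simp only [Subgroup.coe_mul]
      group
    simp only [LinearMap.restrict_coe_apply, Module.End.mul_apply]
    rw [h, map_mul]
    rfl

/-- The space of the representation of `Γ` induced from a representation `σ` of a subgroup
`Δ ≤ Γ`: functions `f : Γ → W` with `f (δ * g) = σ δ (f g)`. -/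
def indSubmodule {Γ : Type*} [Group Γ] (Δ : Subgroup Γ) {W : Type*} [AddCommGroup W]
    [Module ℂ W] (σ : Representation ℂ Δ W) : Submodule ℂ (Γ → W) where
  carrier := {f | ∀ (δ : Δ) (g : Γ), f ((δ : Γ) * g) = σ δ (f g)}
  add_mem' := by
    intro f₁ f₂ h₁ h₂ δ g
    simp [h₁ δ g, h₂ δ g]
  zero_mem' := by
    intro δ g
    simp
  smul_mem' := by
    intro c f hf δ g
    simp [hf δ g]

/-- The representation of `Γ` induced from a representation `σ` of a subgroup `Δ ≤ Γ`,
acting by right translation on `indSubmodule Δ σ`. -/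
def indRep {Γ : Type*} [Group Γ] (Δ : Subgroup Γ) {W : Type*} [AddCommGroup W] [Module ℂ W]
    (σ : Representation ℂ Δ W) : Representation ℂ Γ (indSubmodule Δ σ) where
  toFun h :=
    { toFun := fun f => ⟨fun g => (f : Γ → W) (g * h), fun δ g => by
        show (f : Γ → W) ((δ : Γ) * g * h) = σ δ ((f : Γ → W) (g * h))
        rw [mul_assoc]
        exact f.2 δ (g * h)⟩
      map_add' := fun f₁ f₂ => rfl
      map_smul' := fun c f => rfl }
  map_one' := by
    refine LinearMap.ext fun f => Subtype.ext (funext fun g => ?_)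
    simp
  map_mul' a b := by
    refine LinearMap.ext fun f => Subtype.ext (funext fun g => ?_)
    simp [mul_assoc]


/-!
The translate `ρ(g) S` of the isotypic component depends only on the coset `gΔ`, and every
irreducible `N`-subrepresentation of it is isomorphic to `τ^g`: an `N`-equivariant projection onto
it (Maschke averaging) is nonzero on one of the summands `ρ(g) U ≅ τ^g`, and Schur's lemma
applies. Hence translates along distinct cosets have no common irreducible constituent, so they
are independent, and by irreducibility of `ρ` they span `V`. A representation that is the direct
sum of the translates of a `Δ`-stable subspace `S` is induced from `S`: the map
`f ↦ ∑ γ, ρ(γ⁻¹) (f γ)` is an equivariant isomorphism `Ind_Δ^Γ S → V`.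
-/

section RepIso

variable {G V₁ V₂ V₃ : Type*} [Group G] [AddCommGroup V₁] [Module ℂ V₁]
  [AddCommGroup V₂] [Module ℂ V₂] [AddCommGroup V₃] [Module ℂ V₃]
  {ρ₁ : Representation ℂ G V₁} {ρ₂ : Representation ℂ G V₂} {ρ₃ : Representation ℂ G V₃}

theorem RepIso.refl (ρ : Representation ℂ G V₁) : RepIso ρ ρ :=
  ⟨LinearEquiv.refl ℂ V₁, fun _ _ => rfl⟩

theorem RepIso.symm (h : RepIso ρ₁ ρ₂) : RepIso ρ₂ ρ₁ := by
  obtain ⟨e, he⟩ := h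
  exact ⟨e.symm, fun g v => e.injective (by rw [he, e.apply_symm_apply, e.apply_symm_apply])⟩

theorem RepIso.trans (h₁₂ : RepIso ρ₁ ρ₂) (h₂₃ : RepIso ρ₂ ρ₃) : RepIso ρ₁ ρ₃ := by
  obtain ⟨e, he⟩ := h₁₂
  obtain ⟨e', he'⟩ := h₂₃
  exact ⟨e ≪≫ₗ e', fun g v => by simp [he, he']⟩

theorem RepIso.of_bijective (f : V₁ →ₗ[ℂ] V₂) (hf : ∀ g v, f (ρ₁ g v) = ρ₂ g (f v))
    (hbij : Function.Bijective f) : RepIso ρ₁ ρ₂ :=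
  ⟨LinearEquiv.ofBijective f hbij, hf⟩

theorem IsIrredRep.of_repIso (h₂ : IsIrredRep ρ₂) (h : RepIso ρ₁ ρ₂) : IsIrredRep ρ₁ := by
  obtain ⟨e, he⟩ := h
  have := h₂.1
  refine ⟨e.toEquiv.nontrivial, fun U hU => ?_⟩
  have hinv : ∀ g, ∀ v ∈ U.map (e : V₁ →ₗ[ℂ] V₂), ρ₂ g v ∈ U.map (e : V₁ →ₗ[ℂ] V₂) := by
    rintro g _ ⟨u, hu, rfl⟩
    exact ⟨ρ₁ g u, hU g u hu, he g u⟩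
  have hinj := Submodule.map_injective_of_injective (f := (e : V₁ →ₗ[ℂ] V₂)) e.injective
  refine (h₂.2 _ hinv).imp (fun hbot => hinj ?_) (fun htop => hinj ?_)
  · rw [hbot, Submodule.map_bot]
  · rw [htop, Submodule.map_top, LinearEquiv.range]

theorem IsIrredRep.repIso_of_ne_zero (h₁ : IsIrredRep ρ₁) (h₂ : IsIrredRep ρ₂)
    (f : V₁ →ₗ[ℂ] V₂) (hf : ∀ g v, f (ρ₁ g v) = ρ₂ g (f v)) (hf0 : f ≠ 0) : RepIso ρ₁ ρ₂ := by
  have hker : ∀ g, ∀ v ∈ LinearMap.ker f, ρ₁ g v ∈ LinearMap.ker f := fun g v hv => by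
    rw [LinearMap.mem_ker] at hv ⊢
    rw [hf, hv, map_zero]
  have hrange : ∀ g, ∀ v ∈ LinearMap.range f, ρ₂ g v ∈ LinearMap.range f := by
    rintro g _ ⟨v, rfl⟩
    exact ⟨ρ₁ g v, hf g v⟩
  refine RepIso.of_bijective f hf ⟨LinearMap.ker_eq_bot.1 ?_, LinearMap.range_eq_top.1 ?_⟩
  · exact (h₁.2 _ hker).resolve_right fun h => hf0 (LinearMap.ker_eq_top.1 h)
  · exact (h₂.2 _ hrange).resolve_left fun h => hf0 (LinearMap.range_eq_bot.1 h)

end RepIso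

namespace Representation

section Subgroup

variable {Γ V : Type*} [Group Γ] [AddCommGroup V] [Module ℂ V] (ρ : Representation ℂ Γ V)
  {N : Subgroup Γ}

@[simp]
theorem subRep_apply_coe {U : Submodule ℂ V} (hU : ∀ n ∈ N, ∀ v ∈ U, ρ n v ∈ U) (n : N)
    (v : U) : (subRep ρ N U hU n v : V) = ρ n v :=
  rfl

theorem map_eq_of_mem {U : Submodule ℂ V} (hU : ∀ n ∈ N, ∀ v ∈ U, ρ n v ∈ U) {n : Γ}
    (hn : n ∈ N) : U.map (ρ n) = U :=
  le_antisymm (Submodule.map_le_iff_le_comap.2 fun v hv => hU n hn v hv)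
    fun v hv => ⟨ρ n⁻¹ v, hU _ (N.inv_mem hn) v hv, ρ.self_inv_apply n v⟩

theorem repIso_subRep_of_eq {U U' : Submodule ℂ V} (h : U = U')
    (hU : ∀ n ∈ N, ∀ v ∈ U, ρ n v ∈ U) (hU' : ∀ n ∈ N, ∀ v ∈ U', ρ n v ∈ U') :
    RepIso (subRep ρ N U hU) (subRep ρ N U' hU') := by
  subst h
  exact RepIso.refl _

theorem invariant_iSup {ι : Sort*} {U : ι → Submodule ℂ V}
    (hU : ∀ i, ∀ n ∈ N, ∀ v ∈ U i, ρ n v ∈ U i) : ∀ n ∈ N, ∀ v ∈ ⨆ i, U i, ρ n v ∈ ⨆ i, U i :=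
  fun n hn _ hv => (iSup_le fun i u hu => Submodule.mem_iSup_of_mem i (hU i n hn u hu) :
    ⨆ i, U i ≤ (⨆ i, U i).comap (ρ n)) hv

theorem exists_irreducible_le [FiniteDimensional ℂ V] {Z : Submodule ℂ V}
    (hZ : ∀ n ∈ N, ∀ v ∈ Z, ρ n v ∈ Z) (hZ0 : Z ≠ ⊥) :
    ∃ (Y : Submodule ℂ V) (hY : ∀ n ∈ N, ∀ v ∈ Y, ρ n v ∈ Y),
      Y ≤ Z ∧ IsIrredRep (subRep ρ N Y hY) := by
  obtain ⟨Y, ⟨hYZ, hY0, hY⟩, hmin⟩ := wellFounded_lt.has_min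
    {Y : Submodule ℂ V | Y ≤ Z ∧ Y ≠ ⊥ ∧ ∀ n ∈ N, ∀ v ∈ Y, ρ n v ∈ Y} ⟨Z, le_rfl, hZ0, hZ⟩
  refine ⟨Y, hY, hYZ, Submodule.nontrivial_iff_ne_bot.2 hY0, fun U hU => ?_⟩
  have hinj := Submodule.map_injective_of_injective Y.injective_subtype
  have hle : U.map Y.subtype ≤ Y := Submodule.map_subtype_le Y U
  have hUinv : ∀ n ∈ N, ∀ v ∈ U.map Y.subtype, ρ n v ∈ U.map Y.subtype := by
    rintro n hn _ ⟨u, hu, rfl⟩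
    exact ⟨subRep ρ N Y hY ⟨n, hn⟩ u, hU ⟨n, hn⟩ u hu, rfl⟩
  by_cases hU0 : U.map Y.subtype = ⊥
  · exact .inl (hinj (by rw [hU0, Submodule.map_bot]))
  · refine .inr (hinj ?_)
    rw [Submodule.map_subtype_top]
    by_contra hne
    exact hmin _ ⟨hle.trans hYZ, hU0, hUinv⟩ (lt_of_le_of_ne hle hne)

theorem exists_equivariant_retraction [Finite N] {Y : Submodule ℂ V}
    (hY : ∀ n ∈ N, ∀ v ∈ Y, ρ n v ∈ Y) :
    ∃ p : V →ₗ[ℂ] Y,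
      (∀ y : Y, p y = y) ∧ ∀ (n : N) (v : V), p (ρ n v) = subRep ρ N Y hY n (p v) := by
  cases nonempty_fintype N
  obtain ⟨p₀, hp₀⟩ := LinearMap.exists_leftInverse_of_injective Y.subtype Y.ker_subtype
  set σ := subRep ρ N Y hY
  have hterm : ∀ (n : N) (y : Y), σ n (p₀ (ρ (n⁻¹ : N) y)) = y := fun n y => by
    have : p₀ (ρ (n⁻¹ : N) y) = σ n⁻¹ y := LinearMap.congr_fun hp₀ (σ n⁻¹ y)
    rw [this, σ.self_inv_apply]
  refine ⟨(Fintype.card N : ℂ)⁻¹ • ∑ n : N, σ n ∘ₗ p₀ ∘ₗ ρ (n⁻¹ : N), fun y => ?_, fun m v => ?_⟩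
  · simp only [LinearMap.smul_apply, LinearMap.sum_apply, LinearMap.comp_apply, hterm,
      Finset.sum_const, Finset.card_univ, ← Nat.cast_smul_eq_nsmul ℂ, smul_smul]
    rw [inv_mul_cancel₀ (by exact_mod_cast Fintype.card_ne_zero), one_smul]
  · simp only [LinearMap.smul_apply, LinearMap.sum_apply, LinearMap.comp_apply, map_smul, map_sum]
    congr 1
    refine Fintype.sum_equiv (Equiv.mulLeft m⁻¹) _ _ fun n => ?_
    simp [← Module.End.mul_apply, ← map_mul]

theorem exists_repIso_of_le_iSup [Finite N] {ι : Type*} {U : ι → Submodule ℂ V}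
    (hU : ∀ i, ∀ n ∈ N, ∀ v ∈ U i, ρ n v ∈ U i) (hUirr : ∀ i, IsIrredRep (subRep ρ N (U i) (hU i)))
    {Y : Submodule ℂ V} (hY : ∀ n ∈ N, ∀ v ∈ Y, ρ n v ∈ Y) (hYirr : IsIrredRep (subRep ρ N Y hY))
    (hle : Y ≤ ⨆ i, U i) : ∃ i, RepIso (subRep ρ N (U i) (hU i)) (subRep ρ N Y hY) := by
  obtain ⟨p, hpY, hp⟩ := exists_equivariant_retraction ρ hY
  obtain ⟨i, hi⟩ : ∃ i, p ∘ₗ (U i).subtype ≠ 0 := by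
    by_contra! h
    have hker : Y ≤ LinearMap.ker p :=
      hle.trans (iSup_le fun i u hu => LinearMap.congr_fun (h i) ⟨u, hu⟩)
    have := hYirr.1
    obtain ⟨y, hy0⟩ := exists_ne (0 : Y)
    exact hy0 (by rw [← hpY y]; exact hker y.2)
  exact ⟨i, (hUirr i).repIso_of_ne_zero hYirr _ (fun n u => hp n u) hi⟩

end Subgroup

section Conjugation

variable {Γ V : Type*} [Group Γ] [AddCommGroup V] [Module ℂ V] (ρ : Representation ℂ Γ V)
  {N : Subgroup Γ} (hN : N.Normal)

theorem apply_conj_apply (g n : Γ) (v : V) : ρ g (ρ (g⁻¹ * n * g) v) = ρ n (ρ g v) := by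
  simp [← Module.End.mul_apply, ← map_mul, mul_assoc]

@[simp]
theorem conjSubRep_apply_coe {W : Submodule ℂ V} (hW : ∀ n ∈ N, ∀ v ∈ W, ρ n v ∈ W) (g : Γ)
    (n : N) (v : W) : (conjSubRep ρ N hN W hW g n v : V) = ρ (g⁻¹ * n * g) v :=
  rfl

include hN in
theorem invariant_map_of_normal {U : Submodule ℂ V} (hU : ∀ n ∈ N, ∀ v ∈ U, ρ n v ∈ U) (g : Γ) :
    ∀ n ∈ N, ∀ v ∈ U.map (ρ g), ρ n v ∈ U.map (ρ g) := by
  rintro n hn _ ⟨u, hu, rfl⟩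
  exact ⟨_, hU _ (hN.conj_mem' n hn g) u hu, apply_conj_apply ρ g n u⟩

theorem repIso_conjSubRep_subRep_map {U : Submodule ℂ V} (hU : ∀ n ∈ N, ∀ v ∈ U, ρ n v ∈ U)
    (g : Γ) : RepIso (conjSubRep ρ N hN U hU g)
      (subRep ρ N (U.map (ρ g)) (invariant_map_of_normal ρ hN hU g)) :=
  ⟨Submodule.equivMapOfInjective (ρ g) (ρ.apply_bijective g).1 U,
    fun n v => Subtype.ext (apply_conj_apply ρ g n v)⟩

theorem _root_.RepIso.conj {U W : Submodule ℂ V} {hU : ∀ n ∈ N, ∀ v ∈ U, ρ n v ∈ U}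
    {hW : ∀ n ∈ N, ∀ v ∈ W, ρ n v ∈ W} (h : RepIso (subRep ρ N U hU) (subRep ρ N W hW)) (g : Γ) :
    RepIso (conjSubRep ρ N hN U hU g) (conjSubRep ρ N hN W hW g) := by
  obtain ⟨e, he⟩ := h
  exact ⟨e, fun n v => he ⟨_, hN.conj_mem' n n.2 g⟩ v⟩

theorem _root_.RepIso.conj_inv_mul {W : Submodule ℂ V} {hW : ∀ n ∈ N, ∀ v ∈ W, ρ n v ∈ W}
    {g g' : Γ} (h : RepIso (conjSubRep ρ N hN W hW g) (conjSubRep ρ N hN W hW g')) :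
    RepIso (subRep ρ N W hW) (conjSubRep ρ N hN W hW (g⁻¹ * g')) := by
  obtain ⟨e, he⟩ := h
  refine ⟨e, fun m w => ?_⟩
  have := he ⟨g * m * g⁻¹, hN.conj_mem m m.2 g⟩ w
  convert this using 2 <;> ext <;> simp [mul_assoc]

theorem _root_.IsIrredRep.conj {W : Submodule ℂ V} {hW : ∀ n ∈ N, ∀ v ∈ W, ρ n v ∈ W}
    (hτ : IsIrredRep (subRep ρ N W hW)) (g : Γ) : IsIrredRep (conjSubRep ρ N hN W hW g) := by
  refine ⟨hτ.1, fun U hU => hτ.2 U fun m v hv => ?_⟩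
  convert hU ⟨g * m * g⁻¹, hN.conj_mem m m.2 g⟩ v hv using 1
  ext
  simp [mul_assoc]

theorem repIso_conjSubRep_of_mem {W : Submodule ℂ V} (hW : ∀ n ∈ N, ∀ v ∈ W, ρ n v ∈ W) {n : Γ}
    (hn : n ∈ N) : RepIso (conjSubRep ρ N hN W hW n) (subRep ρ N W hW) :=
  (repIso_conjSubRep_subRep_map ρ hN hW n).trans (repIso_subRep_of_eq ρ (map_eq_of_mem ρ hW hn) _ _)

end Conjugation

section Isotypic

variable {Γ V : Type*} [Group Γ] [AddCommGroup V] [Module ℂ V] (ρ : Representation ℂ Γ V)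
  {N : Subgroup Γ} (hN : N.Normal) {W : Submodule ℂ V} (hW : ∀ n ∈ N, ∀ v ∈ W, ρ n v ∈ W)

def isotypicSubmodule (ρ : Representation ℂ Γ V) (N : Subgroup Γ) (W : Submodule ℂ V)
    (hW : ∀ n ∈ N, ∀ v ∈ W, ρ n v ∈ W) : Submodule ℂ V :=
  sSup {U : Submodule ℂ V |
    ∃ hU : ∀ n ∈ N, ∀ v ∈ U, ρ n v ∈ U, RepIso (subRep ρ N U hU) (subRep ρ N W hW)}

theorem le_isotypicSubmodule : W ≤ isotypicSubmodule ρ N W hW :=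
  le_sSup ⟨hW, RepIso.refl _⟩

theorem isotypicSubmodule_map_eq_iSup (g : Γ) :
    (isotypicSubmodule ρ N W hW).map (ρ g) = ⨆ U : {U : Submodule ℂ V |
      ∃ hU : ∀ n ∈ N, ∀ v ∈ U, ρ n v ∈ U, RepIso (subRep ρ N U hU) (subRep ρ N W hW)},
      (U : Submodule ℂ V).map (ρ g) := by
  rw [isotypicSubmodule, sSup_eq_iSup', Submodule.map_iSup]

theorem repIso_subRep_map_conjSubRep {U : Submodule ℂ V} (hU : ∀ n ∈ N, ∀ v ∈ U, ρ n v ∈ U)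
    (hUW : RepIso (subRep ρ N U hU) (subRep ρ N W hW)) (g : Γ) :
    RepIso (subRep ρ N (U.map (ρ g)) (invariant_map_of_normal ρ hN hU g))
      (conjSubRep ρ N hN W hW g) :=
  (repIso_conjSubRep_subRep_map ρ hN hU g).symm.trans (hUW.conj ρ hN g)

theorem isotypicSubmodule_invariant {Δ : Subgroup Γ}
    (hΔ : ∀ g : Γ, g ∈ Δ ↔ RepIso (conjSubRep ρ N hN W hW g) (subRep ρ N W hW)) :
    ∀ d ∈ Δ, ∀ v ∈ isotypicSubmodule ρ N W hW, ρ d v ∈ isotypicSubmodule ρ N W hW := by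
  intro d hd v hv
  have hle : (isotypicSubmodule ρ N W hW).map (ρ d) ≤ isotypicSubmodule ρ N W hW := by
    rw [isotypicSubmodule_map_eq_iSup]
    exact iSup_le fun ⟨U, hU, hUW⟩ => le_sSup ⟨invariant_map_of_normal ρ hN hU d,
      (repIso_subRep_map_conjSubRep ρ hN hW hU hUW d).trans ((hΔ d).1 hd)⟩
  exact hle ⟨v, hv, rfl⟩

theorem exists_repIso_conjSubRep_of_le_iSup [Finite N] (hτ : IsIrredRep (subRep ρ N W hW))
    {ι : Type*} (g : ι → Γ) {Y : Submodule ℂ V} (hY : ∀ n ∈ N, ∀ v ∈ Y, ρ n v ∈ Y)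
    (hYirr : IsIrredRep (subRep ρ N Y hY))
    (hle : Y ≤ ⨆ i, (isotypicSubmodule ρ N W hW).map (ρ (g i))) :
    ∃ i, RepIso (conjSubRep ρ N hN W hW (g i)) (subRep ρ N Y hY) := by
  set 𝒮 := {U : Submodule ℂ V |
    ∃ hU : ∀ n ∈ N, ∀ v ∈ U, ρ n v ∈ U, RepIso (subRep ρ N U hU) (subRep ρ N W hW)}
  have hle' : Y ≤ ⨆ p : ι × 𝒮, (p.2 : Submodule ℂ V).map (ρ (g p.1)) := by
    refine hle.trans (iSup_le fun i => ?_)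
    rw [isotypicSubmodule_map_eq_iSup ρ hW (g i)]
    exact iSup_le fun U => le_iSup (fun p : ι × 𝒮 => (p.2 : Submodule ℂ V).map (ρ (g p.1))) (i, U)
  have hiso (p : ι × 𝒮) := repIso_subRep_map_conjSubRep ρ hN hW p.2.2.fst p.2.2.snd (g p.1)
  obtain ⟨p, hp⟩ := exists_repIso_of_le_iSup ρ _
    (fun p => (hτ.conj ρ hN (g p.1)).of_repIso (hiso p)) hY hYirr hle'
  exact ⟨p.1, (hiso p).symm.trans hp⟩

theorem iSupIndep_isotypicSubmodule_map_out [FiniteDimensional ℂ V] [Finite N]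
    (hτ : IsIrredRep (subRep ρ N W hW)) {Δ : Subgroup Γ}
    (hΔ : ∀ g : Γ, g ∈ Δ ↔ RepIso (conjSubRep ρ N hN W hW g) (subRep ρ N W hW)) :
    iSupIndep fun c : Γ ⧸ Δ => (isotypicSubmodule ρ N W hW).map (ρ c.out) := by
  set S := isotypicSubmodule ρ N W hW
  have hSN : ∀ n ∈ N, ∀ v ∈ S, ρ n v ∈ S := fun n hn =>
    isotypicSubmodule_invariant ρ hN hW hΔ n ((hΔ n).2 (repIso_conjSubRep_of_mem ρ hN hW hn))
  have hT (c : Γ ⧸ Δ) := invariant_map_of_normal ρ hN hSN c.out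
  rw [iSupIndep_def]
  intro c₀
  rw [disjoint_iff]
  by_contra hne
  have hZ : ∀ n ∈ N, ∀ v ∈ S.map (ρ c₀.out) ⊓ ⨆ c, ⨆ (_ : c ≠ c₀), S.map (ρ c.out),
      ρ n v ∈ S.map (ρ c₀.out) ⊓ ⨆ c, ⨆ (_ : c ≠ c₀), S.map (ρ c.out) := fun n hn v hv =>
    Submodule.mem_inf.2 ⟨hT c₀ n hn v (Submodule.mem_inf.1 hv).1,
      invariant_iSup ρ (fun c => invariant_iSup ρ fun _ => hT c) n hn v (Submodule.mem_inf.1 hv).2⟩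
  obtain ⟨Y, hY, hYle, hYirr⟩ := exists_irreducible_le ρ hZ hne
  obtain ⟨-, h₀⟩ := exists_repIso_conjSubRep_of_le_iSup ρ hN hW hτ (fun _ : Unit => c₀.out) hY hYirr
    ((hYle.trans inf_le_left).trans (le_iSup (fun _ : Unit => S.map (ρ c₀.out)) ()))
  obtain ⟨⟨c, hc₀⟩, hc⟩ := exists_repIso_conjSubRep_of_le_iSup ρ hN hW hτ
    (fun c : {c // c ≠ c₀} => c.1.out) hY hYirr ((hYle.trans inf_le_right).trans iSup_subtype'.le)
  have hmem : c₀.out⁻¹ * c.out ∈ Δ := (hΔ _).2 (RepIso.conj_inv_mul ρ hN (h₀.trans hc.symm)).symm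
  exact hc₀ (by rw [← c₀.out_eq', ← c.out_eq']; exact (QuotientGroup.eq.2 hmem).symm)

end Isotypic

section Induction

variable {Γ V : Type*} [Group Γ] [AddCommGroup V] [Module ℂ V] (ρ : Representation ℂ Γ V)
  {Δ : Subgroup Γ} {S : Submodule ℂ V} (hS : ∀ d ∈ Δ, ∀ v ∈ S, ρ d v ∈ S)

theorem map_mul_eq_map_map (a b : Γ) (U : Submodule ℂ V) :
    U.map (ρ (a * b)) = (U.map (ρ b)).map (ρ a) := by
  rw [map_mul, Module.End.mul_eq_comp, Submodule.map_comp]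

include hS in
theorem map_out_mk (g : Γ) : S.map (ρ (g : Γ ⧸ Δ).out) = S.map (ρ g) := by
  obtain ⟨d, hd⟩ := QuotientGroup.mk_out_eq_mul Δ g
  rw [hd, map_mul_eq_map_map, map_eq_of_mem ρ hS d.2]

include hS in
theorem iSup_map_out_eq_top (hρ : IsIrredRep ρ) (hS0 : S ≠ ⊥) :
    ⨆ c : Γ ⧸ Δ, S.map (ρ c.out) = ⊤ := by
  have hinv : ∀ g : Γ, ∀ v ∈ ⨆ c : Γ ⧸ Δ, S.map (ρ c.out),
      ρ g v ∈ ⨆ c : Γ ⧸ Δ, S.map (ρ c.out) := by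
    intro g v hv
    refine (iSup_le fun c => ?_ :
      ⨆ c : Γ ⧸ Δ, S.map (ρ c.out) ≤ (⨆ c : Γ ⧸ Δ, S.map (ρ c.out)).comap (ρ g)) hv
    rw [← Submodule.map_le_iff_le_comap, ← map_mul_eq_map_map, ← map_out_mk ρ hS]
    exact le_iSup (fun c : Γ ⧸ Δ => S.map (ρ c.out)) _
  refine (hρ.2 _ hinv).resolve_left fun h => hS0 (eq_bot_iff.2 ?_)
  have hS1 := le_iSup (fun c : Γ ⧸ Δ => S.map (ρ c.out)) (1 : Γ)
  rwa [map_out_mk ρ hS, map_eq_of_mem ρ hS Δ.one_mem, h] at hS1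

theorem inv_apply_eq_of_mk_inv_eq (f : indSubmodule Δ (subRep ρ Δ S hS)) {γ γ₀ : Γ}
    (h : ((γ⁻¹ : Γ) : Γ ⧸ Δ) = γ₀⁻¹) : ρ γ⁻¹ ((f : Γ → S) γ) = ρ γ₀⁻¹ ((f : Γ → S) γ₀) := by
  have hd : γ * γ₀⁻¹ ∈ Δ := by simpa using QuotientGroup.eq.1 h
  have hf := f.2 ⟨_, hd⟩ γ₀
  rw [inv_mul_cancel_right] at hf
  rw [hf, subRep_apply_coe, ← Module.End.mul_apply, ← map_mul]
  group

variable [Fintype Γ]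

/-- The `Γ`-map `Ind_Δ^Γ S → V` corresponding to the inclusion `S ⊆ V` under Frobenius
reciprocity. -/
def indLift : indSubmodule Δ (subRep ρ Δ S hS) →ₗ[ℂ] V :=
  ∑ γ : Γ, ρ γ⁻¹ ∘ₗ S.subtype ∘ₗ LinearMap.proj γ ∘ₗ (indSubmodule Δ (subRep ρ Δ S hS)).subtype

theorem indLift_apply (f : indSubmodule Δ (subRep ρ Δ S hS)) :
    indLift ρ hS f = ∑ γ : Γ, ρ γ⁻¹ ((f : Γ → S) γ) := by
  simp [indLift, LinearMap.sum_apply]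

theorem indLift_indRep (g : Γ) (f : indSubmodule Δ (subRep ρ Δ S hS)) :
    indLift ρ hS (indRep Δ (subRep ρ Δ S hS) g f) = ρ g (indLift ρ hS f) := by
  rw [indLift_apply, indLift_apply, map_sum]
  refine Fintype.sum_equiv (Equiv.mulRight g) _ _ fun γ => ?_
  show ρ γ⁻¹ ((f : Γ → S) (γ * g) : V) = ρ g (ρ (γ * g)⁻¹ ((f : Γ → S) (γ * g)))
  simp [← Module.End.mul_apply, ← map_mul]

theorem indLift_injective (hindep : iSupIndep fun c : Γ ⧸ Δ => S.map (ρ c.out)) :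
    Function.Injective (indLift ρ hS) := by
  classical
  rw [injective_iff_map_eq_zero]
  intro f hf
  set F : Γ ⧸ Δ → V := fun c => ∑ γ with ((γ⁻¹ : Γ) : Γ ⧸ Δ) = c, ρ γ⁻¹ ((f : Γ → S) γ)
  have hF : ∀ c ∈ Finset.univ, F c ∈ S.map (ρ c.out) := fun c _ =>
    Submodule.sum_mem _ fun γ hγ => by
      rw [← (Finset.mem_filter.1 hγ).2, map_out_mk ρ hS]
      exact Submodule.mem_map_of_mem ((f : Γ → S) γ).2
  have hF0 := (iSupIndep_iff_finsetSum_eq_zero_imp_eq_zero _).1 hindep Finset.univ F hF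
    (by rw [Finset.sum_fiberwise, ← indLift_apply, hf])
  refine Subtype.ext (funext fun γ₀ => ?_)
  have h := hF0 ((γ₀⁻¹ : Γ) : Γ ⧸ Δ) (Finset.mem_univ _)
  dsimp only [F] at h
  rw [Finset.sum_congr rfl fun γ hγ => inv_apply_eq_of_mk_inv_eq ρ hS f (Finset.mem_filter.1 hγ).2,
    Finset.sum_const, ← Nat.cast_smul_eq_nsmul ℂ, smul_eq_zero, Nat.cast_eq_zero,
    Finset.card_eq_zero] at h
  obtain h | h := h
  · exact absurd rfl (Finset.filter_eq_empty_iff.1 h (Finset.mem_univ γ₀))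
  · exact Submodule.coe_eq_zero.1 ((map_eq_zero_iff _ (ρ.apply_bijective _).1).1 h)

theorem mem_range_indLift {s : V} (hs : s ∈ S) : s ∈ LinearMap.range (indLift ρ hS) := by
  classical
  let f : indSubmodule Δ (subRep ρ Δ S hS) :=
    ⟨fun γ => if h : γ ∈ Δ then ⟨ρ γ s, hS γ h s hs⟩ else 0, fun δ γ => by
      by_cases hγ : γ ∈ Δ
      · simp only [dif_pos hγ, dif_pos (Δ.mul_mem δ.2 hγ)]
        ext
        simp [← Module.End.mul_apply, ← map_mul]
      · simp [hγ, Δ.mul_mem_cancel_left δ.2]⟩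
  have hf : indLift ρ hS f = (Finset.univ.filter (· ∈ Δ)).card • s := by
    rw [indLift_apply, ← Finset.sum_const, Finset.sum_filter]
    refine Finset.sum_congr rfl fun γ _ => ?_
    by_cases hγ : γ ∈ Δ <;> simp [f, hγ]
  have hcard : ((Finset.univ.filter (· ∈ Δ)).card : ℂ) ≠ 0 :=
    Nat.cast_ne_zero.2 (Finset.card_ne_zero.2
      ⟨1, Finset.mem_filter.2 ⟨Finset.mem_univ _, Δ.one_mem⟩⟩)
  refine ⟨((Finset.univ.filter (· ∈ Δ)).card : ℂ)⁻¹ • f, ?_⟩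
  rw [map_smul, hf, ← Nat.cast_smul_eq_nsmul ℂ, smul_smul, inv_mul_cancel₀ hcard, one_smul]

theorem indLift_surjective (hsup : ⨆ c : Γ ⧸ Δ, S.map (ρ c.out) = ⊤) :
    Function.Surjective (indLift ρ hS) := by
  rw [← LinearMap.range_eq_top, eq_top_iff, ← hsup]
  refine iSup_le fun c => ?_
  rintro _ ⟨s, hs, rfl⟩
  obtain ⟨f, hf⟩ := mem_range_indLift ρ hS hs
  exact ⟨indRep Δ _ c.out f, by rw [indLift_indRep, hf]⟩

theorem repIso_indRep_of_iSupIndep (hindep : iSupIndep fun c : Γ ⧸ Δ => S.map (ρ c.out))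
    (hsup : ⨆ c : Γ ⧸ Δ, S.map (ρ c.out) = ⊤) : RepIso ρ (indRep Δ (subRep ρ Δ S hS)) :=
  (RepIso.of_bijective (indLift ρ hS) (indLift_indRep ρ hS)
    ⟨indLift_injective ρ hS hindep, indLift_surjective ρ hS hsup⟩).symm

end Induction

end Representation

/-- Clifford's theorem: let `ρ` be an irreducible complex representation of a finite group
`Γ` on `V`, let `N ⊴ Γ`, let `W ≤ V` be an irreducible `N`-subrepresentation `τ` of `ρ|_N`,
let `S` be the `τ`-isotypic component of `ρ|_N` (the sum of all `N`-subrepresentations of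
`ρ|_N` isomorphic to `τ`), and let `Δ = {g ∈ Γ | τ^g ≅ τ}` be the stabilizer of the
isomorphism class of `τ`.  Then `S` is invariant under `ρ(Δ)` and, as a representation of
`Δ`, satisfies `ρ ≅ Ind_Δ^Γ S`. -/
theorem stmt_11 (Γ : Type) [Group Γ] [Fintype Γ]
    (V : Type) [AddCommGroup V] [Module ℂ V] [FiniteDimensional ℂ V]
    (ρ : Representation ℂ Γ V) (hρ : IsIrredRep ρ)
    (N : Subgroup Γ) (hN : N.Normal)
    (W : Submodule ℂ V) (hW : ∀ n ∈ N, ∀ v ∈ W, ρ n v ∈ W)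
    (hτ : IsIrredRep (subRep ρ N W hW))
    (S : Submodule ℂ V)
    (hS : S = sSup {U : Submodule ℂ V |
      ∃ hU : ∀ n ∈ N, ∀ v ∈ U, ρ n v ∈ U, RepIso (subRep ρ N U hU) (subRep ρ N W hW)})
    (Δ : Subgroup Γ)
    (hΔ : ∀ g : Γ, g ∈ Δ ↔ RepIso (conjSubRep ρ N hN W hW g) (subRep ρ N W hW)) :
    ∃ hSΔ : ∀ d ∈ Δ, ∀ v ∈ S, ρ d v ∈ S,
      RepIso ρ (indRep Δ (subRep ρ Δ S hSΔ)) := by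
  subst hS
  have hSΔ := ρ.isotypicSubmodule_invariant hN hW hΔ
  have hS0 : ρ.isotypicSubmodule N W hW ≠ ⊥ := fun h =>
    Submodule.nontrivial_iff_ne_bot.1 hτ.1 (eq_bot_iff.2 (h ▸ ρ.le_isotypicSubmodule hW))
  exact ⟨hSΔ, ρ.repIso_indRep_of_iSupIndep hSΔ (ρ.iSupIndep_isotypicSubmodule_map_out hN hW hτ hΔ)
    (ρ.iSup_map_out_eq_top hSΔ hρ hS0)⟩
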